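/- arXiv:2001.00691 — 2 statements merged into one kernel-verified Lean document; each statement's English description precedes it below -/
import Mathlib

section
/- Let w : ℝᵏ × ℝᵏ → ℝᵏ be the coordinate-wise absolute difference, w_h(x, y) = |x_h − y_h|. Suppose S ⊆ ℝᵏ has nonempty interior. Then there exist distinct points x̄, x̲ ∈ S such that 0 ∈ ℝᵏ lies in the interior of the set {w(x̄, z) − w(x̲, z) : z ∈ S}. -/
/-- If S ⊆ ℝᵏ has nonempty interior and w is the coordinate-wise
absolute difference, then there are distinct x̄, x̲ ∈ S such that 0 is
in the interior of {w(x̄,z) − w(x̲,z) : z ∈ S}. -/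
theorem nonempty_interior_implies_directional_variation
    (k : ℕ) (hk : 0 < k)
    (S : Set (Fin k → ℝ))
    (hS : (interior S).Nonempty) :
    ∃ xbar ∈ S, ∃ xlow ∈ S, xbar ≠ xlow ∧
      (0 : Fin k → ℝ) ∈ interior
        {v : Fin k → ℝ | ∃ z ∈ S,
          v = fun h => |xbar h - z h| - |xlow h - z h|} := by
  obtain ⟨x0, hx0⟩ := hS
  obtain ⟨ε, hε, hball⟩ := Metric.isOpen_iff.1 isOpen_interior x0 hx0
  have hball' : Metric.ball x0 ε ⊆ S := hball.trans interior_subset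
  set δ : ℝ := ε / 2 with hδ
  have hδ0 : 0 < δ := by positivity
  set xbar : Fin k → ℝ := fun h => x0 h + δ with hxbar
  set xlow : Fin k → ℝ := fun h => x0 h - δ with hxlow
  have hmem : ∀ z : Fin k → ℝ, (∀ h, dist (z h) (x0 h) < ε) → z ∈ S := by
    intro z hz
    apply hball'
    rw [Metric.mem_ball, dist_pi_lt_iff hε]
    exact hz
  refine ⟨xbar, hmem _ (fun h => by simp [xbar, Real.dist_eq, abs_of_pos hδ0]; linarith), 
         xlow, hmem _ (fun h => by simp [xlow, Real.dist_eq, abs_of_pos hδ0]; linarith), ?_, ?_⟩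
  · intro h
    have := congrFun h ⟨0, hk⟩
    simp only [xbar, xlow] at this
    linarith
  · apply mem_interior.2 ⟨Metric.ball 0 δ, ?_, Metric.isOpen_ball, Metric.mem_ball_self hδ0⟩
    intro v hv
    have hv' : ∀ h, |v h| < δ := by
      intro h
      have := (dist_pi_lt_iff hδ0).1 (Metric.mem_ball.1 hv) h
      simpa [Real.dist_eq] using this
    refine ⟨fun h => x0 h - v h / 2, hmem _ (fun h => ?_), ?_⟩
    · have := hv' h
      rw [Real.dist_eq]
      have h2 : |v h / 2| < δ := by
        rw [abs_div, abs_two]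
        have := hv' h
        linarith
      calc |x0 h - v h / 2 - x0 h| = |v h / 2| := by rw [abs_sub_comm]; ring_nf
        _ < δ := h2
        _ < ε := by rw [hδ]; linarith
    · funext h
      have h1 : xbar h - (x0 h - v h / 2) = δ + v h / 2 := by simp only [xbar]; ring
      have h2 : xlow h - (x0 h - v h / 2) = -δ + v h / 2 := by simp only [xlow]; ring
      have hv2 : |v h| < δ := hv' h
      have ha : 0 ≤ δ + v h / 2 := by
        have := abs_lt.1 hv2; linarith
      have hb : -δ + v h / 2 ≤ 0 := by
        have := abs_lt.1 hv2; linarith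
      rw [h1, h2, abs_of_nonneg ha, abs_of_nonpos hb]
      ring
end

section
/- Let w(x, y) ∈ ℝᵈ be the coordinate-wise absolute difference of x, y ∈ ℝᵈ, and let Δ(x; x_i, x_j) = w(x_i, x) − w(x_j, x). Fix d ≥ 1, a coordinate h, reals x̲_h ≠ x̄_h, and β, β₀ ∈ ℝᵈ with β₁ = β₀,₁ = 1 and β_h ≠ β₀,_h. Then (with z = |x̄_h − x̲_h| β₀,_h and δ = |x̄_h − x̲_h|(β₀,_h − β_h) ≠ 0) the four points x̂, x̌, x̃, x̊ constructed in the paper satisfy: Δ(x̃; x̂, x̌)'β₀ = δ/2, Δ(x̃; x̂, x̌)'β = −δ/2, Δ(x̊; x̂, x̌)'β₀ = −δ/2, and Δ(x̊; x̂, x̌)'β = δ/2. -/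
open Finset

lemma my_sum_eq_two {d : ℕ} (a b : Fin d) (hab : a ≠ b) (f : Fin d → ℝ)
    (hf : ∀ i, i ≠ a → i ≠ b → f i = 0) : ∑ i, f i = f a + f b := by
  rw [← Finset.sum_pair hab]
  exact (Finset.sum_subset (Finset.subset_univ {a, b})
    (fun i _ hi => by
      simp only [Finset.mem_insert, Finset.mem_singleton, not_or] at hi
      exact hf i hi.1 hi.2)).symm

/-- Case 1 of Lemma 2″: the four constructed points satisfy the four
sign-flipping index identities. -/
theorem special_covariate_case1_identities
    (d : ℕ) (h : Fin d) (h0 : Fin d) (hzero : (h0 : ℕ) = 0) (hne0 : h ≠ h0)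
    (β β₀ : Fin d → ℝ)
    (hβ1 : β h0 = 1) (hβ01 : β₀ h0 = 1)
    (hdiff : β h ≠ β₀ h)
    (xbarh xlowh : ℝ) (hx : xbarh ≠ xlowh)
    (base : Fin d → ℝ) (hbase0 : base h0 = 0) (hbaseh : base h = xlowh)
    (z δ : ℝ)
    (hz : z = |xbarh - xlowh| * β₀ h)
    (hδ : δ = |xbarh - xlowh| * (β₀ h - β h))
    (xhatm xhat xcheck xtilde xring : Fin d → ℝ)
    (hxhatm : xhatm = base + (xbarh - xlowh) • (Pi.single h 1 : Fin d → ℝ))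
    (hxhat : xhat = xhatm + Pi.single h0 (max (δ / 2 - z) 0))
    (hxcheck : xcheck = base + Pi.single h0 (max (z - δ / 2) 0))
    (hxtilde : xtilde = base)
    (hxring : xring = xhatm +
      Pi.single h0 (max (δ / 2 - z) 0 + max (z - δ / 2) 0))
    (Δ : (Fin d → ℝ) → (Fin d → ℝ) → (Fin d → ℝ) → (Fin d → ℝ))
    (hΔ : ∀ x xi xj, Δ x xi xj = fun i => |xi i - x i| - |xj i - x i|) :
    (∑ i, Δ xtilde xhat xcheck i * β₀ i) = δ / 2 ∧
    (∑ i, Δ xtilde xhat xcheck i * β i) = -(δ / 2) ∧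
    (∑ i, Δ xring xhat xcheck i * β₀ i) = -(δ / 2) ∧
    (∑ i, Δ xring xhat xcheck i * β i) = δ / 2 := by
  have h0h : h0 ≠ h := hne0.symm
  set A := max (δ / 2 - z) 0 with hA
  set B := max (z - δ / 2) 0 with hB
  have hAnn : 0 ≤ A := le_max_right _ _
  have hBnn : 0 ≤ B := le_max_right _ _
  have hAB : A - B = δ / 2 - z := by
    rcases le_total (δ / 2 - z) 0 with hc | hc
    · rw [hA, hB, max_eq_right hc, max_eq_left (by linarith)]; ring
    · rw [hA, hB, max_eq_left hc, max_eq_right (by linarith)]; ring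
  have hzero' : ∀ γ : Fin d → ℝ, ∀ x₀ : Fin d → ℝ,
      (∀ i, i ≠ h0 → i ≠ h → x₀ i = base i) →
      ∑ i, Δ x₀ xhat xcheck i * γ i =
        Δ x₀ xhat xcheck h0 * γ h0 + Δ x₀ xhat xcheck h * γ h := by
    intro γ x₀ hx₀
    refine my_sum_eq_two h0 h h0h _ (fun i hi0 hih => ?_)
    rw [hΔ]
    simp [hxhat, hxhatm, hxcheck, Pi.single_eq_of_ne hi0, Pi.single_eq_of_ne hih,
      hx₀ i hi0 hih]
  have hxhat0 : xhat h0 = A := by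
    simp [hxhat, hxhatm, hbase0, Pi.single_eq_of_ne h0h, Pi.single_eq_same]
  have hxhath : xhat h = xbarh := by
    simp [hxhat, hxhatm, hbaseh, Pi.single_eq_of_ne hne0, Pi.single_eq_same]
  have hxcheck0 : xcheck h0 = B := by
    simp [hxcheck, hbase0, Pi.single_eq_same]
  have hxcheckh : xcheck h = xlowh := by
    simp [hxcheck, hbaseh, Pi.single_eq_of_ne hne0]
  have hxring0 : xring h0 = A + B := by
    simp [hxring, hxhatm, hbase0, Pi.single_eq_of_ne h0h, Pi.single_eq_same]
  have hxringh : xring h = xbarh := by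
    simp [hxring, hxhatm, hbaseh, Pi.single_eq_of_ne hne0, Pi.single_eq_same]
  have hxringbase : ∀ i, i ≠ h0 → i ≠ h → xring i = base i := by
    intro i hi0 hih
    simp [hxring, hxhatm, Pi.single_eq_of_ne hi0, Pi.single_eq_of_ne hih]
  have hxtildebase : ∀ i, i ≠ h0 → i ≠ h → xtilde i = base i := fun i _ _ => by
    rw [hxtilde]
  have hD : (0:ℝ) ≤ |xbarh - xlowh| := abs_nonneg _
  refine ⟨?_, ?_, ?_, ?_⟩
  · rw [hzero' β₀ xtilde hxtildebase, hΔ]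
    simp only [hxhat0, hxhath, hxcheck0, hxcheckh, hxtilde, hbase0, hbaseh]
    rw [sub_zero, sub_zero, abs_of_nonneg hAnn, abs_of_nonneg hBnn, sub_self, abs_zero]
    rw [hβ01]
    linear_combination hAB - hz
  · rw [hzero' β xtilde hxtildebase, hΔ]
    simp only [hxhat0, hxhath, hxcheck0, hxcheckh, hxtilde, hbase0, hbaseh]
    rw [sub_zero, sub_zero, abs_of_nonneg hAnn, abs_of_nonneg hBnn, sub_self, abs_zero]
    rw [hβ1]
    linear_combination hAB - hz + hδ
  · rw [hzero' β₀ xring hxringbase, hΔ]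
    simp only [hxhat0, hxhath, hxcheck0, hxcheckh, hxring0, hxringh]
    have e1 : A - (A + B) = -B := by ring
    have e2 : B - (A + B) = -A := by ring
    rw [e1, e2, abs_neg, abs_neg, abs_of_nonneg hAnn, abs_of_nonneg hBnn,
      sub_self, abs_zero]
    rw [hβ01]
    have hc : |xlowh - xbarh| = |xbarh - xlowh| := abs_sub_comm _ _
    linear_combination -hAB + hz - β₀ h * hc
  · rw [hzero' β xring hxringbase, hΔ]
    simp only [hxhat0, hxhath, hxcheck0, hxcheckh, hxring0, hxringh]
    have e1 : A - (A + B) = -B := by ring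
    have e2 : B - (A + B) = -A := by ring
    rw [e1, e2, abs_neg, abs_neg, abs_of_nonneg hAnn, abs_of_nonneg hBnn,
      sub_self, abs_zero]
    rw [hβ1]
    have hc : |xlowh - xbarh| = |xbarh - xlowh| := abs_sub_comm _ _
    linear_combination -hAB + hz - hδ - β h * hc
end
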